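/- arXiv:2504.04307 — 2 statements merged into one kernel-verified Lean document; each statement's English description precedes it below -/
import Mathlib

section
/- Let K be an algebraically closed field and F ⊆ K a subfield such that K has transcendence degree equal to |K| over F. Then the cardinality of the group Aut(K/F) of automorphisms of K fixing F pointwise is at least 2^|K|; in particular it is strictly greater than |K|. -/
/-! A permutation of a transcendence basis `s` induces an automorphism of the polynomial
subalgebra `F[s]`, which extends to its algebraic closure `K`. Distinct permutations move some
basis element differently, so `Perm s` embeds into `Aut(K/F)`, and `#(Perm s) = 2 ^ #s` as `s`
is infinite. -/

open Cardinal

namespace IsAlgClosure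

variable {F A B L M : Type*} [CommRing F] [CommRing A] [IsDomain A] [CommRing B] [IsDomain B]
  [Field L] [Field M] [Algebra F A] [Algebra F B] [Algebra F L] [Algebra F M]
  [Algebra A L] [IsScalarTower F A L] [Module.IsTorsionFree A L] [IsAlgClosure A L]
  [Algebra B M] [IsScalarTower F B M] [Module.IsTorsionFree B M] [IsAlgClosure B M]

noncomputable def equivOfAlgEquiv (φ : A ≃ₐ[F] B) : L ≃ₐ[F] M :=
  { equivOfEquiv L M φ.toRingEquiv with
    commutes' := fun r => by
      simp [IsScalarTower.algebraMap_apply F A L, IsScalarTower.algebraMap_apply F B M] }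

theorem equivOfAlgEquiv_algebraMap (φ : A ≃ₐ[F] B) (a : A) :
    equivOfAlgEquiv (L := L) (M := M) φ (algebraMap A L a) = algebraMap B M (φ a) :=
  equivOfEquiv_algebraMap L M φ.toRingEquiv a

end IsAlgClosure

namespace IsTranscendenceBasis

variable {F K ι : Type*} [CommRing F] [Field K] [Algebra F K] [IsAlgClosed K] {v : ι → K}
  (hv : IsTranscendenceBasis F v)
include hv

noncomputable def autOfPerm (σ : Equiv.Perm ι) : K ≃ₐ[F] K :=
  letI := IsAlgClosed.isAlgClosure_of_transcendence_basis v hv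
  IsAlgClosure.equivOfAlgEquiv
    (hv.1.aevalEquiv.symm.trans ((MvPolynomial.renameEquiv F σ).trans hv.1.aevalEquiv))

theorem autOfPerm_apply (σ : Equiv.Perm ι) (i : ι) : hv.autOfPerm σ (v i) = v (σ i) := by
  let _ := IsAlgClosed.isAlgClosure_of_transcendence_basis v hv
  have hX (j : ι) : algebraMap _ K (hv.1.aevalEquiv (MvPolynomial.X j)) = v j := by
    rw [hv.1.algebraMap_aevalEquiv, MvPolynomial.aeval_X]
  rw [← hX, autOfPerm, IsAlgClosure.equivOfAlgEquiv_algebraMap, ← hX]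
  simp

theorem autOfPerm_injective : Function.Injective hv.autOfPerm := by
  have := RingHom.domain_nontrivial (algebraMap F K)
  intro σ τ h
  ext i
  apply hv.1.injective
  rw [← hv.autOfPerm_apply, ← hv.autOfPerm_apply, h]

end IsTranscendenceBasis

/-- If `K` is algebraically closed with transcendence degree `|K|` over a
subfield `F`, then `|Aut(K/F)| ≥ 2 ^ |K| > |K|`. -/
theorem aut_card_gt_of_trdeg_eq_card
    (F K : Type*) [Field F] [Field K] [Algebra F K] [IsAlgClosed K]
    (s : Set K) (hs : IsTranscendenceBasis F ((↑) : s → K))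
    (hcard : Cardinal.mk s = Cardinal.mk K) :
    2 ^ Cardinal.mk K ≤ Cardinal.mk (K ≃ₐ[F] K) ∧
      Cardinal.mk K < Cardinal.mk (K ≃ₐ[F] K) := by
  have : Infinite s := by
    rw [Cardinal.infinite_iff, hcard, ← Cardinal.infinite_iff]
    infer_instance
  have hle : 2 ^ #K ≤ #(K ≃ₐ[F] K) :=
    calc 2 ^ #K = #(Equiv.Perm s) := by rw [mk_perm_eq_two_power, hcard]
      _ ≤ #(K ≃ₐ[F] K) := mk_le_of_injective hs.autOfPerm_injective
  exact ⟨hle, (cantor #K).trans_le hle⟩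
end

section
/- Let K be an uncountable algebraically closed field and F a finitely generated subfield of K. Then the cardinality of Aut(K/F) is strictly greater than |K|. -/
/-!
Over a countable field, an uncountable algebraically closed field `K` has a transcendence basis
of cardinality `|K|`. Since `K` is an algebraic closure of the polynomial ring on that basis, every
permutation of the basis extends to an automorphism of `K`, so there are at least
`2 ^ |K| > |K|` of them.
-/

open Cardinal

universe u v w

theorem IsTranscendenceBasis.exists_algEquiv_apply_eq_of_perm
    {F K ι : Type*} [Field F] [Field K] [Algebra F K] [IsAlgClosed K]
    {v : ι → K} (hv : IsTranscendenceBasis F v) (e : Equiv.Perm ι) :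
    ∃ φ : K ≃ₐ[F] K, ∀ i, φ (v i) = v (e i) := by
  let := IsAlgClosed.isAlgClosure_of_transcendence_basis v hv
  let A := Algebra.adjoin F (Set.range v)
  let eA : A ≃ₐ[F] A :=
    hv.1.aevalEquiv.symm.trans ((MvPolynomial.renameEquiv F e).trans hv.1.aevalEquiv)
  let φ : K ≃+* K := IsAlgClosure.equivOfEquiv K K eA.toRingEquiv
  have hφA (a : A) : φ (algebraMap A K a) = algebraMap A K (eA a) :=
    IsAlgClosure.equivOfEquiv_algebraMap K K eA.toRingEquiv a
  refine ⟨AlgEquiv.ofRingEquiv (f := φ) fun r => ?_, fun i => ?_⟩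
  · rw [IsScalarTower.algebraMap_apply F A K, hφA, eA.commutes]
  · have hX (j : ι) : v j = algebraMap A K (hv.1.aevalEquiv (MvPolynomial.X j)) := by
      rw [hv.1.algebraMap_aevalEquiv, MvPolynomial.aeval_X]
    simp only [AlgEquiv.ofRingEquiv_apply, hX, hφA, eA, AlgEquiv.trans_apply,
      AlgEquiv.symm_apply_apply, MvPolynomial.renameEquiv_apply, MvPolynomial.rename_X]

theorem IsTranscendenceBasis.lift_mk_perm_le_lift_mk_algEquiv
    {F : Type w} {K : Type v} {ι : Type u} [Field F] [Field K] [Algebra F K] [IsAlgClosed K]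
    {v : ι → K} (hv : IsTranscendenceBasis F v) :
    lift.{v} #(Equiv.Perm ι) ≤ lift.{u} #(K ≃ₐ[F] K) := by
  choose φ hφ using hv.exists_algEquiv_apply_eq_of_perm
  refine lift_mk_le_lift_mk_of_injective (f := φ) fun e₁ e₂ h => Equiv.ext fun i => ?_
  apply hv.1.injective
  rw [← hφ, ← hφ, h]

theorem IsAlgClosed.mk_lt_mk_algEquiv_of_aleph0_lt
    {F K : Type*} [Field F] [Field K] [Algebra F K] [IsAlgClosed K]
    (hF : #F ≤ ℵ₀) (hK : ℵ₀ < #K) : #K < #(K ≃ₐ[F] K) := by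
  obtain ⟨s, hs⟩ := exists_isTranscendenceBasis F K
  have hKs : #K = #s :=
    lift_inj.mp (cardinal_eq_cardinal_transcendence_basis_of_aleph0_lt _ hs hF hK)
  have : Infinite s := infinite_iff.mpr (hKs ▸ hK.le)
  calc #K = #s := hKs
    _ < 2 ^ #s := cantor _
    _ = #(Equiv.Perm s) := mk_perm_eq_two_power.symm
    _ ≤ #(K ≃ₐ[F] K) := by simpa using hs.lift_mk_perm_le_lift_mk_algEquiv

/-- If `K` is an uncountable algebraically closed field and `F` a finitely
generated subfield, then the group of automorphisms of `K` fixing `F`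
pointwise has cardinality strictly greater than `|K|`. -/
theorem aut_card_gt_of_fg_subfield
    (K : Type*) [Field K] [IsAlgClosed K] [Uncountable K]
    (F : Subfield K) (hfg : ∃ s : Finset K, F = Subfield.closure ↑s) :
    Cardinal.mk K <
      Cardinal.mk {φ : K ≃+* K // ∀ x ∈ F, φ x = x} := by
  obtain ⟨s, rfl⟩ := hfg
  have hF : #(Subfield.closure (s : Set K)) ≤ ℵ₀ :=
    (Subfield.cardinalMk_closure_le_max _).trans (max_le mk_le_aleph0 le_rfl)
  refine (IsAlgClosed.mk_lt_mk_algEquiv_of_aleph0_lt hF aleph0_lt_mk).trans_le ?_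
  let forget (φ : K ≃ₐ[Subfield.closure (s : Set K)] K) :
      {φ : K ≃+* K // ∀ x ∈ Subfield.closure (s : Set K), φ x = x} :=
    ⟨φ.toRingEquiv, fun x hx => φ.commutes ⟨x, hx⟩⟩
  exact mk_le_of_injective (f := forget) fun φ ψ h =>
    AlgEquiv.coe_ringEquiv_injective (congrArg Subtype.val h)
end
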